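/- Let n ≥ 3 and let ω = (1 | m_1, …, m_n) be a normalized reduced class with m_1² + ⋯ + m_n² < 1. Then ω·E ≥ m_n for every exceptional class E ∈ ℰ_K; that is, E_n has the smallest ω-area among all exceptional classes. (Lemma 3.8, following Pinsonnault.) -/

import Mathlib

open Finset

noncomputable section

/-- The intersection pairing on ℝ^{1,n}: coordinate `0` is the coefficient of `H`,
coordinate `i.succ` is the coefficient of `E_{i+1}`.  `H·H = 1`, `E_i·E_i = -1`,
distinct basis vectors are orthogonal. -/
def ip (n : ℕ) (x y : Fin (n + 1) → ℝ) : ℝ :=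
  x 0 * y 0 - ∑ i : Fin n, x i.succ * y i.succ

/-- The canonical class `K = -3H + E_1 + ⋯ + E_n`. -/
def Kc (n : ℕ) : Fin (n + 1) → ℝ := fun j => if (j : ℕ) = 0 then -3 else 1

/-- The reflection `x ↦ x + (x·l)l` along `l`. -/
def reflAlong (n : ℕ) (l : Fin (n + 1) → ℝ) : Function.End (Fin (n + 1) → ℝ) :=
  fun x => x + ip n x l • l

/-- The simple roots: `l_0 = H - E_1 - E_2 - E_3` and `l_i = E_i - E_{i+1}`
for `1 ≤ i ≤ n - 1`. -/
def root (n : ℕ) (i : Fin n) : Fin (n + 1) → ℝ :=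
  if (i : ℕ) = 0 then
    fun j => if (j : ℕ) = 0 then 1 else if (j : ℕ) ≤ 3 then -1 else 0
  else
    fun j => if (j : ℕ) = (i : ℕ) then 1 else if (j : ℕ) = (i : ℕ) + 1 then -1 else 0

/-- The Weyl group `W_n`, generated by the simple reflections `s_{l_0}, …, s_{l_{n-1}}`.
(The generators are involutions, so the submonoid they generate coincides with the
subgroup they generate.) -/
def Wgroup (n : ℕ) : Submonoid (Function.End (Fin (n + 1) → ℝ)) :=
  Submonoid.closure (Set.range fun i : Fin n => reflAlong n (root n i))

/-- The class `E_n`. -/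
def En (n : ℕ) : Fin (n + 1) → ℝ := fun j => if (j : ℕ) = n then 1 else 0

/-- The set `ℰ_K` of exceptional classes: the `W_n`-orbit of `E_n`. -/
def EK (n : ℕ) : Set (Fin (n + 1) → ℝ) := {e | ∃ w ∈ Wgroup n, e = w (En n)}

/-- The coefficients `m_1, …, m_n` of a class `νH - m_1E_1 - ⋯ - m_nE_n`. -/
def mcoord (n : ℕ) (v : Fin (n + 1) → ℝ) : Fin n → ℝ := fun i => -(v i.succ)

/-- A class `νH - m_1E_1 - ⋯ - m_nE_n` is reduced if
`m_1 ≥ m_2 ≥ ⋯ ≥ m_n ≥ 0` and `ν ≥ m_1 + m_2 + m_3`. -/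
def IsReducedVec (n : ℕ) (v : Fin (n + 1) → ℝ) : Prop :=
  Antitone (mcoord n v) ∧ (∀ i, 0 ≤ mcoord n v i) ∧
    ∑ i ∈ Finset.univ.filter (fun i : Fin n => (i : ℕ) < 3), mcoord n v i ≤ v 0


/-!
An exceptional class `E = dH - a_1E_1 - ⋯ - a_nE_n` is integral with `E·E = -1`, `K·E = -1` and
`d ≥ 0`. The first two conditions survive every reflection in `W_n`, which is an isometry fixing
`K`; the third survives the Cremona reflection along `l_0` because `a_1 + a_2 + a_3 ≤ 2d`
(Cauchy–Schwarz on the first three coefficients and `-a ≤ a²` on the others).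

For every such class, `ω·E ≥ m_n` by induction on `d`. If some `a_j ≤ -1`, then `E - E_j` has
nonnegative square and `d ≥ 0`, so it lies in the closed forward light cone together with `ω`
(as `ω·ω = 1 - ∑ m_i² > 0`), and `ω·E ≥ ω·E_j = m_j ≥ m_n`. If all `a_j ≥ 0` and
`a_1 + a_2 + a_3 ≤ d`, then each `a_i ≤ d` for `i ≤ 3`; comparing every `m_i` with `m_3` gives
`∑ m_i a_i ≤ d (m_1 + m_2 + m_3) - m_3 ≤ d - m_n`. Otherwise `t = E·l_0 = d - (a_1 + a_2 + a_3)` is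
negative, and the Cremona reflection `E ↦ E + t l_0` lowers `d` and changes `ω·E` by
`t (1 - m_1 - m_2 - m_3) ≤ 0`.
-/

namespace ExceptionalArea

variable {n : ℕ}

local notation "first₃" => univ.filter (fun i : Fin _ => (i : ℕ) < 3)

lemma ip_comm (x y : Fin (n + 1) → ℝ) : ip n x y = ip n y x := by
  simp only [ip, mul_comm]

lemma ip_add_right (x y z : Fin (n + 1) → ℝ) : ip n x (y + z) = ip n x y + ip n x z := by
  simp only [ip, Pi.add_apply, mul_add, sum_add_distrib]
  ring

lemma ip_sub_right (x y z : Fin (n + 1) → ℝ) : ip n x (y - z) = ip n x y - ip n x z := by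
  simp only [ip, Pi.sub_apply, mul_sub, sum_sub_distrib]
  ring

lemma ip_sub_left (x y z : Fin (n + 1) → ℝ) : ip n (x - y) z = ip n x z - ip n y z := by
  rw [ip_comm, ip_sub_right, ip_comm z, ip_comm z]

lemma ip_smul_right (c : ℝ) (x y : Fin (n + 1) → ℝ) : ip n x (c • y) = c * ip n x y := by
  simp only [ip, Pi.smul_apply, smul_eq_mul, mul_sub, mul_sum, mul_left_comm]

lemma ip_single (x : Fin (n + 1) → ℝ) {p : Fin (n + 1)} (hp : p ≠ 0) :
    ip n x (Pi.single p 1) = -x p := by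
  obtain ⟨j, rfl⟩ := Fin.exists_succ_eq.mpr hp
  simp [ip, Pi.single_apply]

lemma ip_Kc (x : Fin (n + 1) → ℝ) : ip n (Kc n) x = -3 * x 0 - ∑ i : Fin n, x i.succ := by
  simp [ip, Kc]

lemma ip_reflAlong_right (l x y : Fin (n + 1) → ℝ) :
    ip n y (reflAlong n l x) = ip n y x + ip n x l * ip n y l := by
  rw [reflAlong, ip_add_right, ip_smul_right]

lemma ip_reflAlong_reflAlong {l : Fin (n + 1) → ℝ} (hl : ip n l l = -2)
    (x y : Fin (n + 1) → ℝ) :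
    ip n (reflAlong n l x) (reflAlong n l y) = ip n x y := by
  have hxy : ip n (reflAlong n l x) y = ip n x y + ip n x l * ip n y l := by
    rw [ip_comm, ip_reflAlong_right, ip_comm y x]
  have hxl : ip n (reflAlong n l x) l = -ip n x l := by
    rw [ip_comm, ip_reflAlong_right, hl, ip_comm l x]
    ring
  rw [ip_reflAlong_right, hxy, hxl]
  ring

def forwardCone (n : ℕ) : Set (Fin (n + 1) → ℝ) := {x | 0 ≤ ip n x x ∧ 0 ≤ x 0}

lemma ip_nonneg_of_mem_forwardCone {x y : Fin (n + 1) → ℝ} (hx : x ∈ forwardCone n)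
    (hy : y ∈ forwardCone n) : 0 ≤ ip n x y := by
  obtain ⟨hxx, hx0⟩ := hx
  obtain ⟨hyy, hy0⟩ := hy
  simp only [ip] at hxx hyy ⊢
  have hcs := sum_mul_sq_le_sq_mul_sq univ (fun i : Fin n => x i.succ) (fun i => y i.succ)
  have hx2 : 0 ≤ ∑ i : Fin n, x i.succ ^ 2 := sum_nonneg fun i _ => sq_nonneg _
  have hy2 : 0 ≤ ∑ i : Fin n, y i.succ ^ 2 := sum_nonneg fun i _ => sq_nonneg _
  simp only [← sq] at hxx hyy
  have : (∑ i : Fin n, x i.succ * y i.succ) ^ 2 ≤ (x 0 * y 0) ^ 2 := by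
    rw [mul_pow]
    exact hcs.trans (mul_le_mul (by linarith) (by linarith) hy2 (sq_nonneg _))
  linarith [le_of_sq_le_sq this (mul_nonneg hx0 hy0)]

lemma card_filter_lt_three (hn : 3 ≤ n) : #(first₃ : Finset (Fin n)) = 3 := by
  rw [Fin.card_filter_val_lt, min_eq_right hn]

lemma root_of_ne_zero {i : Fin n} (hi : (i : ℕ) ≠ 0) :
    root n i = Pi.single i.castSucc 1 - Pi.single i.succ 1 := by
  funext j
  simp only [root, hi, if_false, Pi.sub_apply, Pi.single_apply, Fin.ext_iff, Fin.val_castSucc,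
    Fin.val_succ]
  split_ifs <;> first | omega | norm_num

lemma ip_root_of_ne_zero {i : Fin n} (hi : (i : ℕ) ≠ 0) (x : Fin (n + 1) → ℝ) :
    ip n x (root n i) = x i.succ - x i.castSucc := by
  have hcs : i.castSucc ≠ 0 := by simp [Fin.ext_iff, hi]
  rw [root_of_ne_zero hi, ip_sub_right, ip_single x hcs, ip_single x (Fin.succ_ne_zero i)]
  ring

lemma ip_root_of_eq_zero {i : Fin n} (hi : (i : ℕ) = 0) (x : Fin (n + 1) → ℝ) :
    ip n x (root n i) = x 0 + ∑ j ∈ first₃, x j.succ := by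
  have hsucc : ∀ j : Fin n,
      x j.succ * root n i j.succ = if (j : ℕ) < 3 then -x j.succ else 0 := by
    intro j
    by_cases hj : (j : ℕ) < 3
    · simp [root, hi, hj, show (j : ℕ) + 1 ≤ 3 by omega]
    · simp [root, hi, hj, show ¬(j : ℕ) + 1 ≤ 3 by omega]
  have h0 : root n i 0 = 1 := by simp [root, hi]
  rw [ip, h0, mul_one, sum_congr rfl fun j _ => hsucc j, ← sum_filter, sum_neg_distrib,
    sub_neg_eq_add]

lemma ip_root_self (hn : 3 ≤ n) (i : Fin n) : ip n (root n i) (root n i) = -2 := by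
  by_cases hi : (i : ℕ) = 0
  · have hroot : ∀ j ∈ first₃, root n i j.succ = -1 := by
      intro j hj
      simp only [mem_filter, mem_univ, true_and] at hj
      simp [root, hi, show (j : ℕ) + 1 ≤ 3 by omega]
    rw [ip_root_of_eq_zero hi, sum_congr rfl hroot, sum_const, card_filter_lt_three hn]
    norm_num [root, hi]
  · rw [ip_root_of_ne_zero hi]
    norm_num [root_of_ne_zero hi, Fin.ext_iff]

lemma ip_Kc_root (hn : 3 ≤ n) (i : Fin n) : ip n (Kc n) (root n i) = 0 := by
  by_cases hi : (i : ℕ) = 0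
  · have hK : ∀ j : Fin n, Kc n j.succ = 1 := fun j => by simp [Kc]
    rw [ip_root_of_eq_zero hi, sum_congr rfl fun j _ => hK j]
    simp [Kc, card_filter_lt_three hn]
  · rw [ip_root_of_ne_zero hi]
    simp [Kc, hi]

lemma root_apply_zero (i : Fin n) : root n i 0 = if (i : ℕ) = 0 then 1 else 0 := by
  by_cases hi : (i : ℕ) = 0
  · simp [root, hi]
  · simp [root, hi, Ne.symm hi]

lemma root_eq_intCast (i : Fin n) : ∃ l : Fin (n + 1) → ℤ, root n i = Int.cast ∘ l := by
  have : ∀ j, ∃ z : ℤ, root n i j = z := by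
    intro j
    unfold root
    split_ifs <;> dsimp only <;> split_ifs <;>
      first
        | exact ⟨1, Int.cast_one.symm⟩
        | exact ⟨0, Int.cast_zero.symm⟩
        | exact ⟨-1, by simp⟩
  choose l hl using this
  exact ⟨l, funext hl⟩

lemma reflAlong_intCast (l u : Fin (n + 1) → ℤ) :
    ∃ v : Fin (n + 1) → ℤ, reflAlong n (Int.cast ∘ l) (Int.cast ∘ u) = Int.cast ∘ v :=
  ⟨u + (u 0 * l 0 - ∑ i : Fin n, u i.succ * l i.succ) • l, by
    funext j
    simp [reflAlong, ip]⟩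

def numericallyExceptional (n : ℕ) : Set (Fin (n + 1) → ℤ) :=
  {u | ip n (Int.cast ∘ u) (Int.cast ∘ u) = -1 ∧ ip n (Kc n) (Int.cast ∘ u) = -1 ∧
    0 ≤ u 0}

lemma sum_sq_eq_of_mem {u : Fin (n + 1) → ℤ} (hu : u ∈ numericallyExceptional n) :
    ∑ i : Fin n, u i.succ ^ 2 = u 0 ^ 2 + 1 := by
  have h := hu.1
  simp only [ip, Function.comp_apply, ← sq] at h
  exact_mod_cast (by linarith : ∑ i : Fin n, (u i.succ : ℝ) ^ 2 = (u 0 : ℝ) ^ 2 + 1)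

lemma sum_eq_of_mem {u : Fin (n + 1) → ℤ} (hu : u ∈ numericallyExceptional n) :
    ∑ i : Fin n, u i.succ = 1 - 3 * u 0 := by
  have h := hu.2.1
  rw [ip_Kc] at h
  simp only [Function.comp_apply] at h
  exact_mod_cast (by linarith : ∑ i : Fin n, (u i.succ : ℝ) = 1 - 3 * u 0)

lemma single_mem_numericallyExceptional {p : Fin (n + 1)} (hp : p ≠ 0) :
    Pi.single p 1 ∈ numericallyExceptional n := by
  have hcast : (Int.cast ∘ Pi.single p 1 : Fin (n + 1) → ℝ) = Pi.single p 1 := by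
    funext j
    simp [Pi.single_apply]
  refine ⟨?_, ?_, by simp [hp.symm]⟩ <;> rw [hcast, ip_single _ hp] <;> simp [Kc, hp]

lemma neg_two_mul_le_sum_three (hn : 3 ≤ n) {u : Fin (n + 1) → ℤ}
    (hu : u ∈ numericallyExceptional n) :
    -(2 * u 0) ≤ ∑ i ∈ first₃, u i.succ := by
  have hsum := sum_filter_add_sum_filter_not univ (fun i : Fin n => (i : ℕ) < 3)
    (fun i => u i.succ)
  have hsq := sum_filter_add_sum_filter_not univ (fun i : Fin n => (i : ℕ) < 3)
    (fun i => u i.succ ^ 2)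
  rw [sum_eq_of_mem hu] at hsum
  rw [sum_sq_eq_of_mem hu] at hsq
  have hrest : ∑ i ∈ univ.filter (fun i : Fin n => ¬(i : ℕ) < 3), u i.succ
      ≤ ∑ i ∈ univ.filter (fun i : Fin n => ¬(i : ℕ) < 3), u i.succ ^ 2 :=
    sum_le_sum fun i _ => Int.le_self_sq _
  have hcs := sq_sum_le_card_mul_sum_sq (s := first₃)
    (f := fun i => u i.succ)
  rw [card_filter_lt_three hn, Nat.cast_ofNat] at hcs
  have hd := hu.2.2
  by_contra! h
  set s := ∑ i ∈ first₃, u i.succ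
  nlinarith [mul_nonneg (show 0 ≤ -s - 2 * u 0 - 1 by omega)
    (show 0 ≤ -s + 2 * u 0 + 4 by omega)]

lemma exists_reflAlong_root_eq (hn : 3 ≤ n) (i : Fin n) {u : Fin (n + 1) → ℤ}
    (hu : u ∈ numericallyExceptional n) :
    ∃ v ∈ numericallyExceptional n,
      reflAlong n (root n i) (Int.cast ∘ u) = Int.cast ∘ v := by
  obtain ⟨l, hl⟩ := root_eq_intCast i
  obtain ⟨v, hv⟩ := reflAlong_intCast l u
  rw [← hl] at hv
  refine ⟨v, ⟨?_, ?_, ?_⟩, hv⟩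
  · rw [← hv, ip_reflAlong_reflAlong (ip_root_self hn i), hu.1]
  · rw [← hv, ip_reflAlong_right, ip_Kc_root hn i, mul_zero, add_zero, hu.2.1]
  · have hv0 : (v 0 : ℝ) = u 0 + ip n (Int.cast ∘ u) (root n i) * root n i 0 :=
      (congrFun hv 0).symm
    have hu0 : (0 : ℝ) ≤ u 0 := by exact_mod_cast hu.2.2
    suffices (0 : ℝ) ≤ v 0 by exact_mod_cast this
    rw [hv0, root_apply_zero]
    split_ifs with hi
    · have hC : (-(2 * u 0) : ℝ) ≤
          ∑ j ∈ first₃, (u j.succ : ℝ) := by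
        exact_mod_cast neg_two_mul_le_sum_three hn hu
      rw [ip_root_of_eq_zero hi]
      simp only [Function.comp_apply, mul_one]
      linarith
    · simpa using hu0

lemma exists_intCast_eq_of_mem_Wgroup (hn : 3 ≤ n) {w : Function.End (Fin (n + 1) → ℝ)}
    (hw : w ∈ Wgroup n) {u : Fin (n + 1) → ℤ} (hu : u ∈ numericallyExceptional n) :
    ∃ v ∈ numericallyExceptional n, w (Int.cast ∘ u) = Int.cast ∘ v := by
  induction hw using Submonoid.closure_induction generalizing u with
  | mem x hx =>
    obtain ⟨i, rfl⟩ := hx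
    exact exists_reflAlong_root_eq hn i hu
  | one => exact ⟨u, hu, rfl⟩
  | mul x y _ _ ihx ihy =>
    obtain ⟨v, hv, hyv⟩ := ihy hu
    obtain ⟨v', hv', hxv⟩ := ihx hv
    exact ⟨v', hv', (congrArg x hyv).trans hxv⟩

lemma mcoord_le_ip_of_one_le {ω : Fin (n + 1) → ℝ} (hω : ω ∈ forwardCone n)
    {u : Fin (n + 1) → ℤ} (hu : u ∈ numericallyExceptional n) {j : Fin n}
    (hj : 1 ≤ u j.succ) :
    mcoord n ω j ≤ ip n ω (Int.cast ∘ u) := by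
  have hj0 : j.succ ≠ 0 := Fin.succ_ne_zero j
  have hjR : (1 : ℝ) ≤ u j.succ := by exact_mod_cast hj
  have hF : Int.cast ∘ u - Pi.single j.succ 1 ∈ forwardCone n := by
    constructor
    · rw [ip_sub_left, ip_sub_right, ip_sub_right, ip_comm (Pi.single j.succ 1) (Int.cast ∘ u),
        ip_single _ hj0, ip_single _ hj0, hu.1]
      simp only [Function.comp_apply, Pi.single_eq_same]
      linarith
    · simpa [hj0.symm] using (show (0 : ℝ) ≤ u 0 by exact_mod_cast hu.2.2)
  have h := ip_nonneg_of_mem_forwardCone hω hF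
  rw [ip_sub_right, ip_single _ hj0] at h
  simp only [mcoord]
  linarith

lemma sum_mul_add_le_mul_sum_three (hn : 3 ≤ n) {m a : Fin n → ℝ} {d : ℝ} (hm : Antitone m)
    (ha : ∀ i, 0 ≤ a i) (hTa : ∑ i ∈ first₃, a i ≤ d)
    (hsum : ∑ i, a i = 3 * d - 1) :
    ∑ i, m i * a i + m ⟨2, by omega⟩ ≤
      d * ∑ i ∈ first₃, m i := by
  set p := m ⟨2, by omega⟩
  have hT : ∀ i ∈ first₃,
      m i * a i - m i * d ≤ p * a i - p * d := by
    intro i hi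
    have hi3 : (i : ℕ) < 3 := (mem_filter.mp hi).2
    have hmi : p ≤ m i := hm (Fin.le_iff_val_le_val.mpr (show (i : ℕ) ≤ 2 by omega))
    have hai : a i ≤ d := (single_le_sum (fun j _ => ha j) hi).trans hTa
    nlinarith
  have hTc : ∀ i ∈ univ.filter (fun i : Fin n => ¬(i : ℕ) < 3), m i * a i ≤ p * a i := by
    intro i hi
    have hi3 : ¬(i : ℕ) < 3 := (mem_filter.mp hi).2
    exact mul_le_mul_of_nonneg_right
      (hm (Fin.le_iff_val_le_val.mpr (show 2 ≤ (i : ℕ) by omega))) (ha i)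
  have h1 := sum_le_sum hT
  have h2 := sum_le_sum hTc
  simp only [sum_sub_distrib, ← sum_mul, ← mul_sum, sum_const, card_filter_lt_three hn,
    nsmul_eq_mul] at h1 h2
  rw [← sum_filter_add_sum_filter_not univ (fun i : Fin n => (i : ℕ) < 3)] at hsum ⊢
  linear_combination h1 + h2 + p * hsum

lemma ip_intCast_eq (ω : Fin (n + 1) → ℝ) (u : Fin (n + 1) → ℤ) :
    ip n ω (Int.cast ∘ u) = ω 0 * u 0 - ∑ i, mcoord n ω i * -(u i.succ : ℝ) := by
  simp [ip, mcoord]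

lemma mcoord_two_le_ip_of_nonpos (hn : 3 ≤ n) {ω : Fin (n + 1) → ℝ}
    (hred : IsReducedVec n ω) {u : Fin (n + 1) → ℤ} (hu : u ∈ numericallyExceptional n)
    (hnonpos : ∀ j : Fin n, u j.succ ≤ 0)
    (hT : 0 ≤ u 0 + ∑ j ∈ first₃, u j.succ) :
    mcoord n ω ⟨2, by omega⟩ ≤ ip n ω (Int.cast ∘ u) := by
  have hTR : (0 : ℝ) ≤ u 0 + ∑ j ∈ first₃, (u j.succ : ℝ) := by
    exact_mod_cast hT
  have hsum : ∑ j : Fin n, (u j.succ : ℝ) = 1 - 3 * u 0 := by exact_mod_cast sum_eq_of_mem hu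
  have h := sum_mul_add_le_mul_sum_three hn (m := mcoord n ω) (a := fun j => -(u j.succ : ℝ))
    (d := u 0) hred.1 (fun j => by simpa using hnonpos j) (by simp only [sum_neg_distrib]; linarith)
    (by simp only [sum_neg_distrib]; linarith)
  have hd : (0 : ℝ) ≤ u 0 := by exact_mod_cast hu.2.2
  rw [ip_intCast_eq]
  nlinarith [hred.2.2]

lemma exists_mem_apply_zero_lt_ip_le (hn : 3 ≤ n) {ω : Fin (n + 1) → ℝ}
    (hred : IsReducedVec n ω) {u : Fin (n + 1) → ℤ} (hu : u ∈ numericallyExceptional n)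
    (hT : u 0 + ∑ j ∈ first₃, u j.succ < 0) :
    ∃ v ∈ numericallyExceptional n, v 0 < u 0 ∧
      ip n ω (Int.cast ∘ v) ≤ ip n ω (Int.cast ∘ u) := by
  set i₀ : Fin n := ⟨0, by omega⟩
  have hi : (i₀ : ℕ) = 0 := rfl
  obtain ⟨v, hv, hsv⟩ := exists_reflAlong_root_eq hn i₀ hu
  have ht : ip n (Int.cast ∘ u) (root n i₀) < 0 := by
    rw [ip_root_of_eq_zero hi]
    simp only [Function.comp_apply]
    exact_mod_cast hT
  have hωl : 0 ≤ ip n ω (root n i₀) := by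
    rw [ip_root_of_eq_zero hi]
    have := hred.2.2
    simp only [mcoord, sum_neg_distrib] at this
    linarith
  refine ⟨v, hv, ?_, ?_⟩
  · have hv0 : (v 0 : ℝ) = u 0 + ip n (Int.cast ∘ u) (root n i₀) * root n i₀ 0 :=
      (congrFun hsv 0).symm
    rw [root_apply_zero, if_pos hi, mul_one] at hv0
    exact_mod_cast (show (v 0 : ℝ) < u 0 by linarith)
  · rw [← hsv, ip_reflAlong_right]
    nlinarith

theorem mcoord_last_le_ip_of_mem (hn : 3 ≤ n) {ω : Fin (n + 1) → ℝ}
    (hred : IsReducedVec n ω) (hω : ω ∈ forwardCone n) {u : Fin (n + 1) → ℤ}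
    (hu : u ∈ numericallyExceptional n) :
    mcoord n ω ⟨n - 1, Nat.sub_lt (by omega) one_pos⟩ ≤ ip n ω (Int.cast ∘ u) := by
  generalize hN : (u 0).toNat = N
  induction N using Nat.strong_induction_on generalizing u with
  | _ N ih =>
    by_cases hcoeff : ∃ j : Fin n, 1 ≤ u j.succ
    · obtain ⟨j, hj⟩ := hcoeff
      exact (hred.1 (Fin.le_iff_val_le_val.mpr (show (j : ℕ) ≤ n - 1 by omega))).trans
        (mcoord_le_ip_of_one_le hω hu hj)
    simp only [not_exists, not_le] at hcoeff
    by_cases hT : 0 ≤ u 0 + ∑ j ∈ first₃, u j.succ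
    · exact (hred.1 (Fin.mk_le_mk.mpr (by omega))).trans
        (mcoord_two_le_ip_of_nonpos hn hred hu (fun j => by linarith [hcoeff j]) hT)
    · obtain ⟨v, hv, hlt, hle⟩ := exists_mem_apply_zero_lt_ip_le hn hred hu (not_le.mp hT)
      exact (ih _ (by have := hv.2.2; omega) hv rfl).trans hle

end ExceptionalArea

open ExceptionalArea

/-- Lemma 3.8 (following Pinsonnault): for a normalized reduced class
`ω = (1 | m_1, …, m_n)` with positive square (`m_1² + ⋯ + m_n² < 1`), the class
`E_n` has the smallest `ω`-area among all exceptional classes: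
`ω·E ≥ m_n` for every `E ∈ ℰ_K`. -/
theorem last_exceptional_class_has_minimal_area
    (n : ℕ) (hn : 3 ≤ n) (ω : Fin (n + 1) → ℝ)
    (hnorm : ω 0 = 1)
    (hred : IsReducedVec n ω)
    (hsq : ∑ i, (mcoord n ω i) ^ 2 < 1) :
    ∀ E ∈ EK n, mcoord n ω ⟨n - 1, by omega⟩ ≤ ip n ω E := by
  rintro _ ⟨w, hw, rfl⟩
  have hω : ω ∈ forwardCone n := by
    refine ⟨?_, by rw [hnorm]; exact zero_le_one⟩
    simp only [ip, hnorm, mcoord, neg_sq, ← sq] at hsq ⊢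
    linarith
  have hlast : Fin.last n ≠ 0 := Fin.ne_of_val_ne (by rw [Fin.val_last, Fin.val_zero]; omega)
  have hEn : En n = Int.cast ∘ Pi.single (Fin.last n) 1 := by
    funext j
    simp [En, Pi.single_apply, Fin.ext_iff]
  obtain ⟨u, hu, hwu⟩ :=
    exists_intCast_eq_of_mem_Wgroup hn hw (single_mem_numericallyExceptional hlast)
  rw [hEn, hwu]
  exact mcoord_last_le_ip_of_mem hn hred hω hu
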